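/- An element γ ∈ Aut(T) of the infinite rooted binary tree is an odometer (i.e., acts transitively on every level n) if and only if sgn_n(γ) = −1 for every n ≥ 1, where sgn_n is the sign of the permutation induced on the 2^n vertices of level n. -/

import Mathlib

open Equiv

/-- Vertices of the infinite rooted binary tree: finite words over `Bool`.
The parent of a nonempty word is `dropLast`. -/
abbrev Wd := List Bool

/-- The group `Ω = Aut(T)` of automorphisms of the infinite rooted binary tree,
realized as the subgroup of permutations of the vertex set preserving length
(levels) and the parent relation. -/
def OmegaSG : Subgroup (Equiv.Perm Wd) where
  carrier := {σ | (∀ w, (σ w).length = w.length) ∧ ∀ w, (σ w).dropLast = σ w.dropLast}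
  one_mem' := ⟨fun _ => rfl, fun _ => rfl⟩
  mul_mem' := by
    rintro σ τ ⟨hσl, hσd⟩ ⟨hτl, hτd⟩
    refine ⟨fun w => ?_, fun w => ?_⟩
    · simp [Equiv.Perm.mul_apply, hσl, hτl]
    · simp [Equiv.Perm.mul_apply, hσd, hτd]
  inv_mem' := by
    rintro σ ⟨hl, hd⟩
    refine ⟨fun w => ?_, fun w => ?_⟩
    · have := hl (σ⁻¹ w)
      rw [show σ (σ⁻¹ w) = w from σ.apply_symm_apply w] at this
      exact this.symm
    · apply σ.injective
      have := hd (σ⁻¹ w)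
      rw [show σ (σ⁻¹ w) = w from σ.apply_symm_apply w] at this
      rw [← this]
      simp

/-- The section pairing: `(u,v)` acts as `u` on the subtree rooted at `false`
and as `v` on the subtree rooted at `true`. -/
def pairFun (f g : Wd → Wd) : Wd → Wd
  | [] => []
  | false :: w => false :: f w
  | true :: w => true :: g w

@[simp] lemma pairFun_nil (f g : Wd → Wd) : pairFun f g [] = [] := rfl
@[simp] lemma pairFun_false (f g : Wd → Wd) (w : Wd) :
    pairFun f g (false :: w) = false :: f w := rfl
@[simp] lemma pairFun_true (f g : Wd → Wd) (w : Wd) :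
    pairFun f g (true :: w) = true :: g w := rfl

lemma pairFun_comp (f g f' g' : Wd → Wd) (hf : ∀ w, f (f' w) = w) (hg : ∀ w, g (g' w) = w) :
    ∀ w, pairFun f g (pairFun f' g' w) = w := by
  rintro (_ | ⟨(_|_), w⟩) <;> simp [hf, hg]

/-- The permutation `(u,v)` of the tree. -/
def pairPerm (u v : Equiv.Perm Wd) : Equiv.Perm Wd where
  toFun := pairFun u v
  invFun := pairFun u.symm v.symm
  left_inv := pairFun_comp _ _ _ _ (fun w => u.symm_apply_apply w) (fun w => v.symm_apply_apply w)
  right_inv := pairFun_comp _ _ _ _ (fun w => u.apply_symm_apply w) (fun w => v.apply_symm_apply w)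

@[simp] lemma pairPerm_apply (u v : Equiv.Perm Wd) (w : Wd) :
    pairPerm u v w = pairFun u v w := rfl

/-- The first-level swap `σ`. -/
def swapPerm : Equiv.Perm Wd where
  toFun w := match w with | [] => [] | b :: w => (!b) :: w
  invFun w := match w with | [] => [] | b :: w => (!b) :: w
  left_inv := by rintro (_ | ⟨b, w⟩) <;> simp
  right_inv := by rintro (_ | ⟨b, w⟩) <;> simp

@[simp] lemma swapPerm_nil : swapPerm [] = [] := rfl
@[simp] lemma swapPerm_cons (b : Bool) (w : Wd) : swapPerm (b :: w) = (!b) :: w := rfl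

lemma swapPerm_mem : swapPerm ∈ OmegaSG := by
  constructor
  · rintro (_ | ⟨b, w⟩) <;> simp
  · rintro (_ | ⟨b, w⟩)
    · simp
    · rcases eq_or_ne w [] with rfl | hw
      · simp
      · simp only [swapPerm_cons, List.dropLast_cons_of_ne_nil hw]

lemma mem_omega_length {u : Equiv.Perm Wd} (hu : u ∈ OmegaSG) (w : Wd) :
    (u w).length = w.length := hu.1 w

lemma mem_omega_ne_nil {u : Equiv.Perm Wd} (hu : u ∈ OmegaSG) {w : Wd} (hw : w ≠ []) :
    u w ≠ [] := by
  intro h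
  exact hw (List.eq_nil_of_length_eq_zero (by rw [← hu.1 w, h]; rfl))

lemma mem_omega_nil {u : Equiv.Perm Wd} (hu : u ∈ OmegaSG) : u [] = [] :=
  List.eq_nil_of_length_eq_zero (hu.1 [])

lemma pairPerm_mem {u v : Equiv.Perm Wd} (hu : u ∈ OmegaSG) (hv : v ∈ OmegaSG) :
    pairPerm u v ∈ OmegaSG := by
  constructor
  · rintro (_ | ⟨(_|_), w⟩) <;> simp [hu.1, hv.1]
  · rintro (_ | ⟨(_|_), w⟩)
    · simp
    · rcases eq_or_ne w [] with rfl | hw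
      · simp [mem_omega_nil hu]
      · simp only [pairPerm_apply, pairFun_false, List.dropLast_cons_of_ne_nil hw,
          List.dropLast_cons_of_ne_nil (mem_omega_ne_nil hu hw)]
        rw [hu.2]
    · rcases eq_or_ne w [] with rfl | hw
      · simp [mem_omega_nil hv]
      · simp only [pairPerm_apply, pairFun_true, List.dropLast_cons_of_ne_nil hw,
          List.dropLast_cons_of_ne_nil (mem_omega_ne_nil hv hw)]
        rw [hv.2]

/-- `(u,v)` as an element of `Ω`. -/
def pairOm (u v : OmegaSG) : OmegaSG := ⟨pairPerm u.1 v.1, pairPerm_mem u.2 v.2⟩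

/-- `σ` as an element of `Ω`. -/
def swapOm : OmegaSG := ⟨swapPerm, swapPerm_mem⟩

/-! ### Levels, restriction, sign, odometers -/

/-- Level `n` of the tree: words of length `n`. -/
abbrev Lv (n : ℕ) := {w : Wd // w.length = n}

instance fintypeLv (n : ℕ) : Fintype (Lv n) := by
  apply Fintype.ofSurjective (fun g : Fin n → Bool => (⟨List.ofFn g, List.length_ofFn (f := g)⟩ : Lv n))
  rintro ⟨w, rfl⟩
  exact ⟨w.get, Subtype.ext (List.ofFn_get w)⟩

/-- The permutation induced by `g ∈ Ω` on level `n`. -/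
def levelPerm (n : ℕ) (g : OmegaSG) : Equiv.Perm (Lv n) where
  toFun w := ⟨g.1 w.1, by rw [mem_omega_length g.2, w.2]⟩
  invFun w := ⟨(g⁻¹ : OmegaSG).1 w.1, by rw [mem_omega_length (g⁻¹ : OmegaSG).2, w.2]⟩
  left_inv w := Subtype.ext (by simp)
  right_inv w := Subtype.ext (by simp)

/-- Restriction to level `n` as a group homomorphism. -/
def levelHom (n : ℕ) : OmegaSG →* Equiv.Perm (Lv n) where
  toFun := levelPerm n
  map_one' := Equiv.ext fun w => Subtype.ext rfl
  map_mul' g h := Equiv.ext fun w => Subtype.ext rfl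

/-- `sgn_n`: the sign of the permutation induced on level `n`. -/
noncomputable def sgn (n : ℕ) (g : OmegaSG) : ℤˣ := Equiv.Perm.sign (levelPerm n g)

/-- An odometer: an element acting transitively on every level of the tree. -/
def IsOdometer (g : OmegaSG) : Prop :=
  ∀ n : ℕ, ∀ v w : Lv n, ∃ k : ℤ, ((g ^ k : OmegaSG) : Equiv.Perm Wd) v.1 = w.1

/-! ### The profinite topology on `Aut(T)` -/

instance : TopologicalSpace Wd := ⊥
instance : DiscreteTopology Wd := ⟨rfl⟩
instance : TopologicalSpace (Equiv.Perm Wd) :=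
  TopologicalSpace.induced (fun g => (g : Wd → Wd)) Pi.topologicalSpace

lemma continuous_permCoe : Continuous (fun g : Equiv.Perm Wd => (g : Wd → Wd)) :=
  continuous_induced_dom

lemma continuous_permApply (w : Wd) : Continuous fun g : Equiv.Perm Wd => g w :=
  (continuous_apply w).comp continuous_permCoe

instance : IsTopologicalGroup (Equiv.Perm Wd) where
  continuous_mul := by
    apply continuous_induced_rng.2
    apply continuous_pi
    intro w
    rw [continuous_discrete_rng]
    intro y
    have h : (fun p : Equiv.Perm Wd × Equiv.Perm Wd => ((p.1 * p.2 : Equiv.Perm Wd) : Wd → Wd) w) ⁻¹' {y}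
        = ⋃ x : Wd, {p : Equiv.Perm Wd × Equiv.Perm Wd | p.2 w = x} ∩ {p | p.1 x = y} := by
      ext p
      simp only [Set.mem_preimage, Set.mem_singleton_iff, Set.mem_iUnion, Set.mem_inter_iff,
        Set.mem_setOf_eq, Equiv.Perm.mul_apply]
      constructor
      · intro hh; exact ⟨p.2 w, rfl, hh⟩
      · rintro ⟨x, rfl, hh⟩; exact hh
    show IsOpen ((fun p : Equiv.Perm Wd × Equiv.Perm Wd =>
      ((p.1 * p.2 : Equiv.Perm Wd) : Wd → Wd) w) ⁻¹' {y})
    rw [h]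
    refine isOpen_iUnion fun x => IsOpen.inter ?_ ?_
    · exact IsOpen.preimage ((continuous_permApply w).comp continuous_snd) (isOpen_discrete {x})
    · exact IsOpen.preimage ((continuous_permApply x).comp continuous_fst) (isOpen_discrete {y})
  continuous_inv := by
    apply continuous_induced_rng.2
    apply continuous_pi
    intro w
    rw [continuous_discrete_rng]
    intro y
    have h : (fun g : Equiv.Perm Wd => ((g⁻¹ : Equiv.Perm Wd) : Wd → Wd) w) ⁻¹' {y}
        = {g : Equiv.Perm Wd | g y = w} := by
      ext g
      simp only [Set.mem_preimage, Set.mem_singleton_iff, Set.mem_setOf_eq]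
      constructor
      · rintro rfl; simp
      · intro hh; rw [← hh]; simp
    show IsOpen ((fun g : Equiv.Perm Wd => ((g⁻¹ : Equiv.Perm Wd) : Wd → Wd) w) ⁻¹' {y})
    rw [h]
    exact IsOpen.preimage (continuous_permApply y) (isOpen_discrete {w})

/-! ### The recursive generators `a₁ = σ`, `a₂ = (a₃⁻¹, a₂⁻¹)σ`, `a₃ = (a₂, a₃)` -/

mutual
  /-- The underlying function of `a₂`. -/
  def pA : Wd → Wd
    | [] => []
    | false :: w => true :: piA w
    | true :: w => false :: qiA w
  /-- The underlying function of `a₃`. -/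
  def qA : Wd → Wd
    | [] => []
    | false :: w => false :: pA w
    | true :: w => true :: qA w
  /-- The underlying function of `a₂⁻¹`. -/
  def piA : Wd → Wd
    | [] => []
    | false :: w => true :: qA w
    | true :: w => false :: pA w
  /-- The underlying function of `a₃⁻¹`. -/
  def qiA : Wd → Wd
    | [] => []
    | false :: w => false :: piA w
    | true :: w => true :: qiA w
end

lemma a_inv_lemma : ∀ w : Wd, pA (piA w) = w ∧ piA (pA w) = w ∧ qA (qiA w) = w ∧ qiA (qA w) = w := by
  intro w
  induction w with
  | nil => simp [pA, qA, piA, qiA]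
  | cons b w ih =>
    cases b <;>
      simp [pA, qA, piA, qiA, ih.1, ih.2.1, ih.2.2.1, ih.2.2.2]

/-- The generator `a₂`. -/
def a2 : Equiv.Perm Wd where
  toFun := pA
  invFun := piA
  left_inv w := (a_inv_lemma w).2.1
  right_inv w := (a_inv_lemma w).1

/-- The generator `a₃`. -/
def a3 : Equiv.Perm Wd where
  toFun := qA
  invFun := qiA
  left_inv w := (a_inv_lemma w).2.2.2
  right_inv w := (a_inv_lemma w).2.2.1

lemma a_length_lemma : ∀ w : Wd, (pA w).length = w.length ∧ (qA w).length = w.length ∧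
    (piA w).length = w.length ∧ (qiA w).length = w.length := by
  intro w
  induction w with
  | nil => simp [pA, qA, piA, qiA]
  | cons b w ih =>
    cases b <;>
      simp [pA, qA, piA, qiA, ih.1, ih.2.1, ih.2.2.1, ih.2.2.2]

lemma a_ne_nil {f : Wd → Wd} (hf : ∀ w : Wd, (f w).length = w.length) {w : Wd} (hw : w ≠ []) :
    f w ≠ [] := by
  intro h
  exact hw (List.eq_nil_of_length_eq_zero (by rw [← hf w, h]; rfl))

lemma a_dropLast_lemma : ∀ w : Wd, (pA w).dropLast = pA w.dropLast ∧
    (qA w).dropLast = qA w.dropLast ∧ (piA w).dropLast = piA w.dropLast ∧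
    (qiA w).dropLast = qiA w.dropLast := by
  intro w
  induction w with
  | nil => simp [pA, qA, piA, qiA]
  | cons b w ih =>
    rcases eq_or_ne w [] with rfl | hw
    · cases b <;> simp [pA, qA, piA, qiA]
    · have hp := a_ne_nil (fun w => (a_length_lemma w).1) hw
      have hq := a_ne_nil (fun w => (a_length_lemma w).2.1) hw
      have hpi := a_ne_nil (fun w => (a_length_lemma w).2.2.1) hw
      have hqi := a_ne_nil (fun w => (a_length_lemma w).2.2.2) hw
      cases b <;>
        simp [pA, qA, piA, qiA, List.dropLast_cons_of_ne_nil hw,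
          List.dropLast_cons_of_ne_nil hp, List.dropLast_cons_of_ne_nil hq,
          List.dropLast_cons_of_ne_nil hpi, List.dropLast_cons_of_ne_nil hqi,
          ih.1, ih.2.1, ih.2.2.1, ih.2.2.2]

lemma a2_mem : a2 ∈ OmegaSG :=
  ⟨fun w => (a_length_lemma w).1, fun w => (a_dropLast_lemma w).1⟩

lemma a3_mem : a3 ∈ OmegaSG :=
  ⟨fun w => (a_length_lemma w).2.1, fun w => (a_dropLast_lemma w).2.1⟩

/-- `a₁ = σ` as an element of `Ω`. -/
def A1 : OmegaSG := swapOm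
/-- `a₂` as an element of `Ω`. -/
def A2 : OmegaSG := ⟨a2, a2_mem⟩
/-- `a₃` as an element of `Ω`. -/
def A3 : OmegaSG := ⟨a3, a3_mem⟩

/-- `G = ⟨⟨a₁, a₃⟩⟩`, the topological closure of the subgroup generated by `a₁` and `a₃`:
a model of the geometric iterated monodromy group of `f(x) = 2/(x-1)²`. -/
noncomputable def Ggrp : Subgroup OmegaSG :=
  (Subgroup.closure {A1, A3}).topologicalClosure

/-- The normal closure in `G` of the closed subgroup generated by an element `c`:
the closed subgroup generated by all `G`-conjugates of `c`. -/
noncomputable def nclG (c : OmegaSG) : Subgroup OmegaSG :=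
  (Subgroup.closure {x | ∃ g ∈ Ggrp, x = g * c * g⁻¹}).topologicalClosure

/-- `U`, the normal closure in `G` of `⟨⟨a₂a₃⁻¹⟩⟩`. -/
noncomputable def Ugrp : Subgroup OmegaSG := nclG (A2 * A3⁻¹)

/-- `H₁`, the normal closure in `G` of `⟨⟨a₁⟩⟩`. -/
noncomputable def H1grp : Subgroup OmegaSG := nclG A1

/-- `H₃`, the normal closure in `G` of `⟨⟨a₃⟩⟩`. -/
noncomputable def H3grp : Subgroup OmegaSG := nclG A3

/-!
Level `n` has `2ⁿ` vertices. A permutation acting transitively on an even number of points is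
a single cycle of even length, hence odd. Conversely, argue by induction on the level: `γ` on
level `n + 1` covers `γ` on level `n` two-to-one via the parent map. If it were not transitive,
every orbit would still map onto level `n`, so there would be exactly two orbits, each a copy of
the action on level `n`, and then `sgn_{n+1} γ = (sgn_n γ)² = 1`.
-/

namespace Equiv.Perm

variable {α β γ : Type*}

theorem eq_subtypeCongr_subtypePerm (f : Perm α) {P : α → Prop} [DecidablePred P]
    (hP : ∀ x, P (f x) ↔ P x) :
    f = (f.subtypePerm hP).subtypeCongr (f.subtypePerm fun x => not_congr (hP x)) := by
  ext x
  by_cases hx : P x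
  · simp [subtypeCongr.left_apply _ _ hx]
  · simp [subtypeCongr.right_apply _ _ hx]

variable [Fintype α] [DecidableEq α]

theorem sign_eq_neg_one_of_forall_sameCycle [Nonempty α] {f : Perm α}
    (heven : Even (Fintype.card α)) (htrans : ∀ x y : α, f.SameCycle x y) : sign f = -1 := by
  have hnontriv : Nontrivial α := by
    rw [← Fintype.one_lt_card_iff_nontrivial]
    obtain ⟨k, hk⟩ := heven
    have := Fintype.card_pos (α := α)
    omega
  have hfree : ∀ x, f x ≠ x := fun x hx => by
    obtain ⟨y, hy⟩ := exists_ne x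
    obtain ⟨k, rfl⟩ := htrans x y
    exact hy (zpow_apply_eq_self_of_apply_eq_self hx k)
  obtain ⟨x⟩ := ‹Nonempty α›
  have hcycle : f.IsCycle := ⟨x, hfree x, fun y _ => htrans x y⟩
  have hsupport : f.support = Finset.univ :=
    Finset.eq_univ_of_forall fun y => mem_support.2 (hfree y)
  rw [hcycle.sign, hsupport, Finset.card_univ, heven.neg_one_pow]

theorem surjective_of_semiconj [Finite β] [Nonempty γ] {q : γ → β} {f : Perm γ} {g : Perm β}
    (hq : Function.Semiconj q f g) (htrans : ∀ x y : β, g.SameCycle x y) :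
    Function.Surjective q := fun y => by
  obtain ⟨x⟩ := ‹Nonempty γ›
  obtain ⟨k, hk⟩ := (htrans (q x) y).exists_nat_pow_eq
  refine ⟨(f ^ k) x, ?_⟩
  rw [coe_pow, (hq.iterate_right k).eq, ← coe_pow, hk]

theorem sign_eq_of_semiconj_of_surjective [Fintype β] [DecidableEq β] {q : α → β} {f : Perm α}
    {g : Perm β} (hq : Function.Semiconj q f g) (hsurj : Function.Surjective q)
    (hcard : Fintype.card α = Fintype.card β) : sign f = sign g :=
  sign_eq_sign_of_equiv f g
    (Equiv.ofBijective q ((Fintype.bijective_iff_surjective_and_card q).2 ⟨hsurj, hcard⟩)) hq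

theorem forall_sameCycle_of_semiconj_of_sign_eq_neg_one [Fintype β] [DecidableEq β]
    {p : α → β} {f : Perm α} {g : Perm β} (hp : Function.Semiconj p f g)
    (hcard : Fintype.card α = 2 * Fintype.card β) (htrans : ∀ x y : β, g.SameCycle x y)
    (hsign : sign f = -1) : ∀ x y : α, f.SameCycle x y := by
  by_contra! ⟨a, b, hab⟩
  let P := f.SameCycle a
  have hP : ∀ x, P (f x) ↔ P x := fun x => sameCycle_apply_right
  have hPc : ∀ x, ¬P (f x) ↔ ¬P x := fun x => not_congr (hP x)
  have hsemiP : Function.Semiconj (p ∘ Subtype.val) (f.subtypePerm hP) g := fun x => hp x.1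
  have hsemiPc : Function.Semiconj (p ∘ Subtype.val) (f.subtypePerm (p := (¬P ·)) hPc) g :=
    fun x => hp x.1
  have : Nonempty {x // P x} := ⟨⟨a, SameCycle.refl f a⟩⟩
  have : Nonempty {x // ¬P x} := ⟨⟨b, hab⟩⟩
  have hsurjP := surjective_of_semiconj hsemiP htrans
  have hsurjPc := surjective_of_semiconj hsemiPc htrans
  have hcardP := Fintype.card_le_of_surjective _ hsurjP
  have hcardPα := Fintype.card_subtype_le P
  have hcardPc := Fintype.card_le_of_surjective _ hsurjPc
  rw [Fintype.card_subtype_compl, hcard] at hcardPc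
  have hsplit : sign f = sign g * sign g := by
    rw [eq_subtypeCongr_subtypePerm f hP, sign_subtypeCongr,
      sign_eq_of_semiconj_of_surjective hsemiP hsurjP (by omega),
      sign_eq_of_semiconj_of_surjective hsemiPc hsurjPc (by rw [Fintype.card_subtype_compl]; omega)]
  rw [hsplit, Int.units_mul_self] at hsign
  exact absurd hsign (by decide)

end Equiv.Perm

lemma card_Lv (n : ℕ) : Fintype.card (Lv n) = 2 ^ n := by
  rw [Fintype.card_eq_nat_card, ← Fintype.card_bool, ← card_vector, ← Nat.card_eq_fintype_card]
  rfl

instance (n : ℕ) : Nonempty (Lv n) := ⟨⟨List.replicate n false, List.length_replicate⟩⟩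

instance : Subsingleton (Lv 0) := ⟨fun v w => Subtype.ext <| by
  rw [List.eq_nil_of_length_eq_zero v.2, List.eq_nil_of_length_eq_zero w.2]⟩

lemma levelPerm_zpow_apply (γ : OmegaSG) (n : ℕ) (k : ℤ) (v : Lv n) :
    ((levelPerm n γ ^ k) v).1 = ((γ ^ k : OmegaSG) : Perm Wd) v.1 := by
  change ((levelHom n γ ^ k) v).1 = _
  rw [← map_zpow]
  rfl

lemma isOdometer_iff_forall_sameCycle (γ : OmegaSG) :
    IsOdometer γ ↔ ∀ n, ∀ v w : Lv n, (levelPerm n γ).SameCycle v w := by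
  refine forall_congr' fun n => forall₂_congr fun v w => exists_congr fun k => ?_
  rw [← levelPerm_zpow_apply, Subtype.ext_iff]

def Lv.parent (n : ℕ) (w : Lv (n + 1)) : Lv n :=
  ⟨w.1.dropLast, by simp [w.2]⟩

lemma semiconj_levelPerm_parent (γ : OmegaSG) (n : ℕ) :
    Function.Semiconj (Lv.parent n) (levelPerm (n + 1) γ) (levelPerm n γ) :=
  fun w => Subtype.ext (γ.2.2 w.1)

/-- `γ ∈ Aut(T)` is an odometer iff `sgn_n(γ) = -1` for all `n ≥ 1`. -/
theorem stmt3 (γ : OmegaSG) :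
    IsOdometer γ ↔ ∀ n : ℕ, 1 ≤ n → sgn n γ = -1 := by
  rw [isOdometer_iff_forall_sameCycle]
  constructor
  · intro htrans n hn
    exact Perm.sign_eq_neg_one_of_forall_sameCycle
      (by rw [card_Lv]; exact (Nat.even_pow' (by omega)).2 even_two) (htrans n)
  · intro hsgn n
    induction n with
    | zero => exact fun v w => Subsingleton.elim v w ▸ Perm.SameCycle.refl _ v
    | succ n ih =>
      exact Perm.forall_sameCycle_of_semiconj_of_sign_eq_neg_one (semiconj_levelPerm_parent γ n)
        (by rw [card_Lv, card_Lv, pow_succ, mul_comm]) ih (hsgn (n + 1) n.succ_pos)
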